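/- Let n ≥ 1 and let t = (t_{i,j,k})_{1 ≤ i < j < k ≤ n} be a family of integers such that the normal form map N_t : ℤ^n → G(t) is bijective. Let t_u = (t_{i,j,k})_{2 ≤ i < j < k ≤ n} be the subfamily of entries with all indices different from 1, and let G(t_u) be the corresponding presented group on generators b_2, …, b_n. Then the subgroup ⟨a_2, …, a_n⟩ of G(t) is isomorphic to G(t_u) via an isomorphism sending b_i to a_i for 2 ≤ i ≤ n. -/

import Mathlib

namespace HallPoly

/-- The ordered product `g_1^{e_1} ⋯ g_n^{e_n}` taken in increasing order of indices. -/
def prodPow {Γ : Type*} [Group Γ] (n : ℕ) (g : Fin n → Γ) (e : Fin n → ℤ) : Γ :=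
  ((List.finRange n).map fun k => g k ^ e k).prod

/-- The relators of the presented group `G(t)`:
`(a_i · a_j · a_{j+1}^{t_{i,j,j+1}} ⋯ a_n^{t_{i,j,n}})⁻¹ · (a_j · a_i)` for `1 ≤ i < j ≤ n`. -/
def rels (n : ℕ) (t : Fin n → Fin n → Fin n → ℤ) : Set (FreeGroup (Fin n)) :=
  { r | ∃ i j : Fin n, i < j ∧
      r = (FreeGroup.of i * FreeGroup.of j *
            prodPow n FreeGroup.of (fun k => if j < k then t i j k else 0))⁻¹ *
          (FreeGroup.of j * FreeGroup.of i) }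

/-- The presented group `G(t)` with generators `a_1, …, a_n` and relations
`a_j·a_i = a_i·a_j·a_{j+1}^{t_{i,j,j+1}} ⋯ a_n^{t_{i,j,n}}` for `1 ≤ i < j ≤ n`. -/
abbrev G (n : ℕ) (t : Fin n → Fin n → Fin n → ℤ) : Type := PresentedGroup (rels n t)

/-- The generators `a_1, …, a_n` of `G(t)`. -/
def a (n : ℕ) (t : Fin n → Fin n → Fin n → ℤ) (i : Fin n) : G n t :=
  PresentedGroup.of i

/-- The normal form map `N_t : ℤⁿ → G(t)`, `x ↦ a_1^{x_1} ⋯ a_n^{x_n}`. -/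
def N (n : ℕ) (t : Fin n → Fin n → Fin n → ℤ) (x : Fin n → ℤ) : G n t :=
  prodPow n (a n t) x

/-! The assignment `b_i ↦ a_{i+1}` respects the relations of `G(t_u)`, so it defines a
homomorphism `G(t_u) → G(t)` with image `U(t) = ⟨a_2, …, a_n⟩`. In every group of this shape the
normal form map is surjective: conjugation by `a_1` sends each `a_j` with `j ≥ 2` to `a_j` times a
word in later generators, so by descending induction on `j` it maps `U(t)` onto itself. Hence
`G(t) = ⟨a_1⟩ · U(t)`, and induction on `n`, applied to `U(t)` as the image of `G(t_u)`, gives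
surjectivity. So every element of `G(t_u)` is some `N_{t_u}(x)`, which is sent to `N_t(0, x)`,
and injectivity of `N_t` makes the homomorphism injective. -/

section prodPow

variable {Γ Δ : Type*} [Group Γ] [Group Δ]

lemma map_prodPow (f : Γ →* Δ) (n : ℕ) (g : Fin n → Γ) (e : Fin n → ℤ) :
    f (prodPow n g e) = prodPow n (fun i => f (g i)) e := by
  simp only [prodPow, map_list_prod, List.map_map, Function.comp_def, map_zpow]

lemma prodPow_succ (n : ℕ) (g : Fin (n + 1) → Γ) (e : Fin (n + 1) → ℤ) :
    prodPow (n + 1) g e = g 0 ^ e 0 * prodPow n (fun i => g i.succ) (fun i => e i.succ) := by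
  simp only [prodPow, List.finRange_succ, List.map_cons, List.prod_cons, List.map_map,
    Function.comp_def]

lemma prodPow_mem_closure (n : ℕ) (g : Fin n → Γ) (e : Fin n → ℤ) :
    prodPow n g e ∈ Subgroup.closure (g '' Function.support e) := by
  refine list_prod_mem fun x hx => ?_
  obtain ⟨i, -, rfl⟩ := List.mem_map.1 hx
  by_cases hi : e i = 0
  · simp [hi]
  · exact Subgroup.zpow_mem _ (Subgroup.subset_closure (Set.mem_image_of_mem g hi)) _

end prodPow

def SatisfiesRels {Γ : Type*} [Group Γ] (n : ℕ) (t : Fin n → Fin n → Fin n → ℤ)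
    (g : Fin n → Γ) : Prop :=
  ∀ i j : Fin n, i < j →
    g j * g i = g i * g j * prodPow n g (fun k => if j < k then t i j k else 0)

section Rels

variable {Γ : Type*} [Group Γ] {n : ℕ} {t : Fin n → Fin n → Fin n → ℤ}

lemma satisfiesRels_iff_lift_rels {g : Fin n → Γ} :
    SatisfiesRels n t g ↔ ∀ r ∈ rels n t, FreeGroup.lift g r = 1 := by
  simp only [SatisfiesRels, rels, Set.mem_ofPred_eq, forall_exists_index, and_imp]
  refine ⟨?_, fun h i j hij => ?_⟩
  · rintro h r i j hij rfl
    simp only [map_mul, map_inv, map_prodPow, FreeGroup.lift_apply_of, inv_mul_eq_one,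
      h i j hij]
  · have := h _ i j hij rfl
    simp only [map_mul, map_inv, map_prodPow, FreeGroup.lift_apply_of, inv_mul_eq_one] at this
    exact this.symm

lemma satisfiesRels_a : SatisfiesRels n t (a n t) := by
  intro i j hij
  have h := PresentedGroup.one_of_mem (rels := rels n t) ⟨i, j, hij, rfl⟩
  simp only [map_mul, map_inv, map_prodPow, inv_mul_eq_one] at h
  exact h.symm

def lift {g : Fin n → Γ} (hg : SatisfiesRels n t g) : G n t →* Γ :=
  PresentedGroup.toGroup (satisfiesRels_iff_lift_rels.1 hg)

lemma lift_a {g : Fin n → Γ} (hg : SatisfiesRels n t g) (i : Fin n) : lift hg (a n t i) = g i :=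
  PresentedGroup.toGroup.of _

lemma lift_N {g : Fin n → Γ} (hg : SatisfiesRels n t g) (x : Fin n → ℤ) :
    lift hg (N n t x) = prodPow n g x := by
  simp only [N, map_prodPow, lift_a]

end Rels

lemma map_closure_range_eq_of_inv_mul_mem {Γ ι : Type*} [Group Γ] [Preorder ι] [WellFoundedGT ι]
    (f : Γ →* Γ) (s : ι → Γ)
    (hs : ∀ j, (s j)⁻¹ * f (s j) ∈ Subgroup.closure (s '' Set.Ioi j)) :
    (Subgroup.closure (Set.range s)).map f = Subgroup.closure (Set.range s) := by
  set K := Subgroup.closure (Set.range s)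
  refine le_antisymm ?_ ?_
  · rw [MonoidHom.map_closure, Subgroup.closure_le]
    rintro _ ⟨_, ⟨j, rfl⟩, rfl⟩
    rw [← mul_inv_cancel_left (s j) (f (s j))]
    exact mul_mem (Subgroup.subset_closure ⟨j, rfl⟩)
      (Subgroup.closure_mono (Set.image_subset_range _ _) (hs j))
  · rw [Subgroup.closure_le]
    rintro _ ⟨j, rfl⟩
    induction j using WellFoundedGT.induction with
    | ind j ih =>
      have hj : Subgroup.closure (s '' Set.Ioi j) ≤ K.map f := by
        rw [Subgroup.closure_le]
        rintro _ ⟨k, hk, rfl⟩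
        exact ih k hk
      -- `s j = f (s j) * c⁻¹`, where `c` only involves the later generators
      rw [show s j = f (s j) * ((s j)⁻¹ * f (s j))⁻¹ by group]
      exact mul_mem (Subgroup.mem_map_of_mem f (Subgroup.subset_closure ⟨j, rfl⟩))
        (inv_mem (hj (hs j)))

section Tail

variable {m : ℕ} (t : Fin (m + 1) → Fin (m + 1) → Fin (m + 1) → ℤ)

/-- The family `t_u`. -/
def tail : Fin m → Fin m → Fin m → ℤ := fun i j k => t i.succ j.succ k.succ

lemma satisfiesRels_tail : SatisfiesRels m (tail t) (fun i => a (m + 1) t i.succ) := by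
  intro i j hij
  have h := satisfiesRels_a (t := t) i.succ j.succ (Fin.succ_lt_succ_iff.2 hij)
  rw [prodPow_succ] at h
  simpa [tail, Fin.succ_lt_succ_iff] using h

/-- The subgroup `U(t) = ⟨a_2, …, a_n⟩` (generators are indexed from `0` here). -/
def U : Subgroup (G (m + 1) t) :=
  Subgroup.closure (Set.range fun i : Fin m => a (m + 1) t i.succ)

def tailHom : G m (tail t) →* G (m + 1) t := lift (satisfiesRels_tail t)

lemma tailHom_N (x : Fin m → ℤ) : tailHom t (N m (tail t) x) = N (m + 1) t (Fin.cons 0 x) := by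
  rw [tailHom, lift_N, N, prodPow_succ]
  simp

lemma range_tailHom : (tailHom t).range = U t := by
  rw [MonoidHom.range_eq_map, ← PresentedGroup.closure_range_of, MonoidHom.map_closure,
    ← Set.range_comp]
  exact congrArg _ (congrArg _ (funext (lift_a (satisfiesRels_tail t))))

lemma a_zero_mem_normalizer_U : a (m + 1) t 0 ∈ Subgroup.normalizer (U t : Set (G (m + 1) t)) := by
  rw [← inv_mem_iff, Subgroup.mem_normalizer_iff_map_conj_eq]
  refine map_closure_range_eq_of_inv_mul_mem _ _ fun j => ?_
  have hconj : (a (m + 1) t j.succ)⁻¹ * ((a (m + 1) t 0)⁻¹ * a (m + 1) t j.succ * a (m + 1) t 0) =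
      prodPow m (fun k => a (m + 1) t k.succ)
        (fun k => if j < k then t 0 j.succ k.succ else 0) := by
    rw [mul_assoc _ (a (m + 1) t j.succ), satisfiesRels_a 0 j.succ (Fin.succ_pos j), prodPow_succ]
    simp [Fin.succ_lt_succ_iff, mul_assoc]
  rw [MonoidHom.coe_coe, MulAut.conj_apply, inv_inv, hconj]
  refine Subgroup.closure_mono (Set.image_mono fun k hk => ?_) (prodPow_mem_closure _ _ _)
  by_contra hjk
  exact hk (if_neg hjk)

lemma zpowers_a_zero_sup_U : Subgroup.zpowers (a (m + 1) t 0) ⊔ U t = ⊤ := by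
  have hrange : Set.range (a (m + 1) t) =
      insert (a (m + 1) t 0) (Set.range fun i : Fin m => a (m + 1) t i.succ) :=
    Fin.range_fin_succ _
  rw [Subgroup.zpowers_eq_closure, U, ← Subgroup.closure_union, ← Set.insert_eq, ← hrange]
  exact PresentedGroup.closure_range_of _

end Tail

theorem N_surjective : ∀ (n : ℕ) (t : Fin n → Fin n → Fin n → ℤ), Function.Surjective (N n t)
  | 0, t => fun g => ⟨0, by
    have hg : g ∈ (⊥ : Subgroup (G 0 t)) := by
      rw [← Subgroup.closure_empty, ← Set.range_eq_empty (PresentedGroup.of (rels := rels 0 t)),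
        PresentedGroup.closure_range_of]
      trivial
    simp [N, prodPow, Subgroup.mem_bot.1 hg]⟩
  | m + 1, t => by
    intro g
    have hg : g ∈ Subgroup.zpowers (a (m + 1) t 0) ⊔ U t := zpowers_a_zero_sup_U t ▸ trivial
    rw [← SetLike.mem_coe, Subgroup.coe_mul_of_left_le_normalizer_right _ _
      (Subgroup.zpowers_le.2 (a_zero_mem_normalizer_U t))] at hg
    obtain ⟨_, ⟨z, rfl⟩, _, hu, rfl⟩ := hg
    rw [← range_tailHom] at hu
    obtain ⟨v, rfl⟩ := hu
    obtain ⟨y, rfl⟩ := N_surjective m (tail t) v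
    refine ⟨Fin.cons z y, ?_⟩
    rw [tailHom_N, N, N, prodPow_succ, prodPow_succ]
    simp

lemma tailHom_injective {m : ℕ} {t : Fin (m + 1) → Fin (m + 1) → Fin (m + 1) → ℤ}
    (hN : Function.Injective (N (m + 1) t)) : Function.Injective (tailHom t) := by
  intro g h hgh
  obtain ⟨x, rfl⟩ := N_surjective m (tail t) g
  obtain ⟨y, rfl⟩ := N_surjective m (tail t) h
  rw [tailHom_N, tailHom_N] at hgh
  rw [Fin.cons_right_injective 0 (hN hgh)]

/-- If `G(t)` is consistent, the subgroup `U(t) = ⟨a_2, …, a_n⟩` of `G(t)` is isomorphic to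
the presented group `G(t_u)`, where `t_u` is the subfamily of `t` of entries with all indices
different from `1`; the isomorphism sends the `i`-th generator of `G(t_u)` to `a_{i+1}`. -/
theorem subgroup_U_iso (m : ℕ) (t : Fin (m + 1) → Fin (m + 1) → Fin (m + 1) → ℤ)
    (hN : Function.Bijective (N (m + 1) t))
    (tu : Fin m → Fin m → Fin m → ℤ)
    (htu : ∀ i j k : Fin m, tu i j k = t i.succ j.succ k.succ) :
    ∃ φ : G m tu ≃* (Subgroup.closure (Set.range fun i : Fin m => a (m + 1) t i.succ) :
        Subgroup (G (m + 1) t)),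
      ∀ i : Fin m, (φ (a m tu i) : G (m + 1) t) = a (m + 1) t i.succ := by
  obtain rfl : tu = tail t := funext fun i => funext fun j => funext fun k => htu i j k
  exact ⟨(MonoidHom.ofInjective (tailHom_injective hN.1)).trans
    (MulEquiv.subgroupCongr (range_tailHom t)), lift_a (satisfiesRels_tail t)⟩

end HallPoly
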